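/- Let G be a group with a surjective monoid homomorphism σ : Σ* → G from a free monoid over a finite alphabet such that σ⁻¹(1) is context-free, and let H be a finitely generated subgroup of G with a surjective monoid homomorphism μ : Δ* → H from a free monoid over a finite alphabet. Then μ⁻¹(1) is context-free. -/

import Mathlib

/-!
Choosing for every letter `δ` of `Δ` a word `f δ` over `α` with `σ (f δ) = μ δ`, the word problem
of `H` becomes the preimage of the word problem of `G` under the homomorphism `w ↦ w.flatMap f`,
so it suffices that context-free languages are closed under inverse homomorphisms.

For a grammar `g` we build `g.preimage f` with nonterminals `triple x X y`, where `x` and `y` are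
prefixes of blocks `f δ`: `triple x X y` derives `w` when `X` derives some `z` with
`x ++ z = w.flatMap f ++ y`, i.e. `z` covers the image of `w` except for an overhang `x` already
produced on the left and an overhang `y` still to be produced on the right. A rule of `g` lifts by
guessing the overhangs between consecutive symbols; a terminal `a` either extends the overhang
`x` to `x ++ [a]`, or completes a block `f δ = x ++ [a]` and emits `δ` followed by letters that
`f` erases. Soundness holds because every rule is valid for the intended meaning of the symbols;
completeness is an induction on parse trees of `g`.
-/

namespace ContextFreeGrammar

section Yields

variable {T : Type*} {g : ContextFreeGrammar T}

theorem produces_of_mem_rules {r : ContextFreeRule T g.NT} (hr : r ∈ g.rules) :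
    g.Produces [.nonterminal r.input] r.output :=
  ⟨r, hr, ContextFreeRule.Rewrites.input_output⟩

variable (g) in
inductive Yields : List (Symbol T g.NT) → List T → Prop
  | nil : Yields [] []
  | terminal (a : T) {s : List (Symbol T g.NT)} {z : List T} :
      Yields s z → Yields (.terminal a :: s) (a :: z)
  | nonterminal {r : ContextFreeRule T g.NT} (hr : r ∈ g.rules)
      {s : List (Symbol T g.NT)} {z₁ z₂ : List T} :
      Yields r.output z₁ → Yields s z₂ → Yields (.nonterminal r.input :: s) (z₁ ++ z₂)

variable {s s₁ s₂ u v : List (Symbol T g.NT)} {z z₁ z₂ : List T}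

theorem Yields.append (h₁ : g.Yields s₁ z₁) (h₂ : g.Yields s₂ z₂) :
    g.Yields (s₁ ++ s₂) (z₁ ++ z₂) := by
  induction h₁ with
  | nil => exact h₂
  | terminal a _ ih => exact .terminal a ih
  | nonterminal hr hout _ _ ih => simpa using Yields.nonterminal hr hout ih

theorem yields_append_iff :
    g.Yields (s₁ ++ s₂) z ↔ ∃ z₁ z₂, z = z₁ ++ z₂ ∧ g.Yields s₁ z₁ ∧ g.Yields s₂ z₂ := by
  refine ⟨fun h => ?_, fun ⟨z₁, z₂, hz, h₁, h₂⟩ => hz ▸ h₁.append h₂⟩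
  induction s₁ generalizing z with
  | nil => exact ⟨[], z, rfl, .nil, h⟩
  | cons X s₁ ih =>
    cases h with
    | terminal a h =>
      obtain ⟨z₁, z₂, rfl, h₁, h₂⟩ := ih h
      exact ⟨a :: z₁, z₂, rfl, .terminal a h₁, h₂⟩
    | nonterminal hr hout h =>
      obtain ⟨z₁, z₂, rfl, h₁, h₂⟩ := ih h
      exact ⟨_ ++ z₁, z₂, (List.append_assoc ..).symm, .nonterminal hr hout h₁, h₂⟩

theorem yields_map_terminal (z : List T) : g.Yields (z.map .terminal) z := by
  induction z with
  | nil => exact .nil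
  | cons a z ih => exact .terminal a ih

theorem Yields.of_produces (hp : g.Produces u v) (hv : g.Yields v z) : g.Yields u z := by
  obtain ⟨r, hr, hrw⟩ := hp
  obtain ⟨p, q, rfl, rfl⟩ := hrw.exists_parts
  obtain ⟨z₁₂, z₃, rfl, h₁₂, h₃⟩ := yields_append_iff.mp hv
  obtain ⟨z₁, z₂, rfl, h₁, h₂⟩ := yields_append_iff.mp h₁₂
  exact (h₁.append (by simpa using Yields.nonterminal hr h₂ .nil)).append h₃

theorem Yields.derives (h : g.Yields s z) : g.Derives s (z.map .terminal) := by
  induction h with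
  | nil => exact .refl _
  | terminal a _ ih => exact ih.append_left [.terminal a]
  | nonterminal hr _ _ ih₁ ih₂ =>
    rw [List.map_append]
    exact ((produces_of_mem_rules hr).append_right _).trans_derives
      ((ih₁.append_right _).trans (ih₂.append_left _))

theorem derives_iff_yields : g.Derives s (z.map .terminal) ↔ g.Yields s z := by
  refine ⟨fun h => ?_, Yields.derives⟩
  induction h using Relation.ReflTransGen.head_induction_on with
  | refl => exact yields_map_terminal z
  | head hp _ ih => exact ih.of_produces hp

end Yields

inductive PreimageNT (α N : Type) : Type
  | start
  | erase
  | triple (x : List α) (X : Symbol α N) (y : List α)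

section Semantics

variable {α : Type} {Δ : Type*}

open Classical in
noncomputable def liftings {N : Type} (P : Finset (List α)) :
    List α → List (Symbol α N) → List α → Finset (List (Symbol Δ (PreimageNT α N)))
  | x, [], y => if x = y then {[]} else ∅
  | x, X :: s, y => P.biUnion fun b => (liftings P b s y).image (.nonterminal (.triple x X b) :: ·)

variable {N : Type} {P : Finset (List α)} {x y b : List α} {X : Symbol α N}
  {s : List (Symbol α N)} {u : List (Symbol Δ (PreimageNT α N))}

theorem nil_mem_liftings : ([] : List (Symbol Δ (PreimageNT α N))) ∈ liftings P x [] x := by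
  simp [liftings]

theorem cons_mem_liftings (hb : b ∈ P) (hu : u ∈ liftings P b s y) :
    .nonterminal (.triple x X b) :: u ∈ liftings P x (X :: s) y := by
  simp only [liftings, Finset.mem_biUnion, Finset.mem_image]
  exact ⟨b, hb, u, hu, rfl⟩

theorem eq_of_mem_liftings_singleton (hu : u ∈ liftings P x [X] y) :
    u = [.nonterminal (.triple x X y)] := by
  simp only [liftings, Finset.mem_biUnion, Finset.mem_image] at hu
  obtain ⟨b, -, u, hu, rfl⟩ := hu
  split_ifs at hu with hby
  · rw [Finset.mem_singleton.mp hu, hby]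
  · simp at hu

variable {g : ContextFreeGrammar α} {f : Δ → List α} {w : List Δ}

variable (g f) in
def preimageSem : Symbol Δ (PreimageNT α g.NT) → Language Δ
  | .terminal δ => {[δ]}
  | .nonterminal .start => {w | w.flatMap f ∈ g.language}
  | .nonterminal .erase => {w | w.flatMap f = []}
  | .nonterminal (.triple x X y) => {w | ∃ z, g.Yields [X] z ∧ x ++ z = w.flatMap f ++ y}

variable (g f) in
def preimageSemList (s : List (Symbol Δ (PreimageNT α g.NT))) : Language Δ :=
  (s.map (preimageSem g f)).prod

theorem mem_preimageSem_start :
    w ∈ preimageSem g f (.nonterminal .start) ↔ w.flatMap f ∈ g.language :=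
  Iff.rfl

theorem mem_preimageSem_erase : w ∈ preimageSem g f (.nonterminal .erase) ↔ w.flatMap f = [] :=
  Iff.rfl

theorem preimageSemList_append (u v : List (Symbol Δ (PreimageNT α g.NT))) :
    preimageSemList g f (u ++ v) = preimageSemList g f u * preimageSemList g f v := by
  simp [preimageSemList]

theorem preimageSemList_singleton (X : Symbol Δ (PreimageNT α g.NT)) :
    preimageSemList g f [X] = preimageSem g f X := by
  simp [preimageSemList]

theorem mem_preimageSemList_map_terminal (w : List Δ) :
    w ∈ preimageSemList g f (w.map .terminal) := by
  induction w with
  | nil => exact (Language.mem_one _).mpr rfl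
  | cons δ w ih => exact Language.mem_mul.mpr ⟨[δ], rfl, w, ih, rfl⟩

theorem exists_yields_of_mem_liftings {s : List (Symbol α g.NT)}
    {u : List (Symbol Δ (PreimageNT α g.NT))} (hu : u ∈ liftings P x s y)
    (hw : w ∈ preimageSemList g f u) : ∃ z, g.Yields s z ∧ x ++ z = w.flatMap f ++ y := by
  induction s generalizing x u w with
  | nil =>
    simp only [liftings] at hu
    split_ifs at hu with hxy
    · obtain rfl := Finset.mem_singleton.mp hu
      obtain rfl := (Language.mem_one w).mp hw
      exact ⟨[], .nil, by simp [hxy]⟩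
    · simp at hu
  | cons X s ih =>
    simp only [liftings, Finset.mem_biUnion, Finset.mem_image] at hu
    obtain ⟨b, -, u, hu, rfl⟩ := hu
    obtain ⟨w₁, ⟨z₁, hz₁, hxz₁⟩, w₂, hw₂, rfl⟩ := hw
    obtain ⟨z₂, hz₂, hbz₂⟩ := ih hu hw₂
    refine ⟨z₁ ++ z₂, hz₁.append hz₂, ?_⟩
    rw [← List.append_assoc, hxz₁, List.append_assoc, hbz₂]
    simp

end Semantics

section Preimage

variable {α : Type} {Δ : Type*} [Fintype Δ]

open Classical in
noncomputable def blockPrefixes (f : Δ → List α) : Finset (List α) :=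
  insert [] (Finset.univ.biUnion fun δ => (f δ).inits.toFinset)

variable {g : ContextFreeGrammar α} {f : Δ → List α} {x y : List α}

theorem mem_blockPrefixes : x ∈ blockPrefixes f ↔ x = [] ∨ ∃ δ, x <+: f δ := by
  simp [blockPrefixes]

theorem nil_mem_blockPrefixes : [] ∈ blockPrefixes f :=
  mem_blockPrefixes.mpr (.inl rfl)

theorem mem_blockPrefixes_of_prefix_block {δ : Δ} (hx : x <+: f δ) : x ∈ blockPrefixes f :=
  mem_blockPrefixes.mpr (.inr ⟨δ, hx⟩)

theorem mem_blockPrefixes_of_prefix (hxy : x <+: y) (hy : y ∈ blockPrefixes f) :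
    x ∈ blockPrefixes f := by
  rcases mem_blockPrefixes.mp hy with rfl | ⟨δ, hy⟩
  · exact List.prefix_nil.mp hxy ▸ nil_mem_blockPrefixes
  · exact mem_blockPrefixes_of_prefix_block (hxy.trans hy)

open Classical in
noncomputable def preimageRules (g : ContextFreeGrammar α) (f : Δ → List α) :
    Finset (ContextFreeRule Δ (PreimageNT α g.NT)) :=
  {⟨.start, [.nonterminal .erase, .nonterminal (.triple [] (.nonterminal g.initial) [])]⟩,
    ⟨.erase, []⟩} ∪
  (Finset.univ.filter (f · = [])).image (fun δ => ⟨.erase, [.terminal δ, .nonterminal .erase]⟩) ∪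
  Finset.univ.biUnion (fun δ => (f δ).getLast?.toFinset.image fun a =>
    ⟨.triple (f δ).dropLast (.terminal a) [], [.terminal δ, .nonterminal .erase]⟩) ∪
  (blockPrefixes f).biUnion (fun y => y.getLast?.toFinset.image fun a =>
    ⟨.triple y.dropLast (.terminal a) y, []⟩) ∪
  g.rules.biUnion fun r => (blockPrefixes f ×ˢ blockPrefixes f).biUnion fun p =>
    (liftings (blockPrefixes f) p.1 r.output p.2).image fun u =>
      ⟨.triple p.1 (.nonterminal r.input) p.2, u⟩

noncomputable abbrev preimage (g : ContextFreeGrammar α) (f : Δ → List α) :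
    ContextFreeGrammar Δ :=
  ⟨PreimageNT α g.NT, .start, preimageRules g f⟩

theorem preimage_produces_of_mem {r : ContextFreeRule Δ (PreimageNT α g.NT)}
    (hr : r ∈ preimageRules g f) : (g.preimage f).Produces [.nonterminal r.input] r.output :=
  produces_of_mem_rules hr

theorem preimage_produces_start :
    (g.preimage f).Produces [.nonterminal .start]
      [.nonterminal .erase, .nonterminal (.triple [] (.nonterminal g.initial) [])] :=
  preimage_produces_of_mem (r := ⟨.start, _⟩) (by simp [preimageRules])

theorem preimage_produces_erase_nil : (g.preimage f).Produces [.nonterminal .erase] [] :=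
  preimage_produces_of_mem (r := ⟨.erase, _⟩) (by simp [preimageRules])

theorem preimage_produces_erase_cons {δ : Δ} (hδ : f δ = []) :
    (g.preimage f).Produces [.nonterminal .erase] [.terminal δ, .nonterminal .erase] :=
  preimage_produces_of_mem (r := ⟨.erase, _⟩) (by simp [preimageRules, hδ])

theorem preimage_produces_read {δ : Δ} {a : α} (hδ : f δ = x ++ [a]) :
    (g.preimage f).Produces [.nonterminal (.triple x (.terminal a) [])]
      [.terminal δ, .nonterminal .erase] :=
  preimage_produces_of_mem (r := ⟨.triple _ _ _, _⟩) (by simp [preimageRules, hδ])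

theorem preimage_produces_shift {a : α} (hx : x ++ [a] ∈ blockPrefixes f) :
    (g.preimage f).Produces [.nonterminal (.triple x (.terminal a) (x ++ [a]))] [] :=
  preimage_produces_of_mem (r := ⟨.triple _ _ _, _⟩) (by simp [preimageRules, hx])

theorem preimage_produces_lift {r : ContextFreeRule α g.NT} (hr : r ∈ g.rules)
    (hx : x ∈ blockPrefixes f) (hy : y ∈ blockPrefixes f)
    {u : List (Symbol Δ (PreimageNT α g.NT))} (hu : u ∈ liftings (blockPrefixes f) x r.output y) :
    (g.preimage f).Produces [.nonterminal (.triple x (.nonterminal r.input) y)] u :=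
  preimage_produces_of_mem (r := ⟨.triple _ _ _, _⟩) <| by
    simpa [preimageRules] using ⟨r, hr, hx, hy, hu, rfl⟩

theorem preimageSemList_le_of_mem {r : ContextFreeRule Δ (PreimageNT α g.NT)}
    (hr : r ∈ preimageRules g f) :
    preimageSemList g f r.output ≤ preimageSem g f (.nonterminal r.input) := by
  simp only [preimageRules, Finset.mem_union, Finset.mem_insert, Finset.mem_singleton,
    Finset.mem_image, Finset.mem_filter, Finset.mem_biUnion, Finset.mem_univ, true_and,
    Option.mem_toFinset, Option.mem_def, Finset.mem_product] at hr
  rcases hr with ((((rfl | rfl) | ⟨δ, hδ, rfl⟩) | ⟨δ, a, ha, rfl⟩) | ⟨y, -, a, ha, rfl⟩) |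
    ⟨r, hr, ⟨x, y⟩, -, u, hu, rfl⟩
  · rintro _ ⟨w₁, (hw₁ : w₁.flatMap f = []), -, ⟨w₂, ⟨z, hz, hzw₂⟩, -, rfl, rfl⟩, rfl⟩
    rw [List.nil_append, List.append_nil] at hzw₂
    refine mem_preimageSem_start.mpr ?_
    simpa [hw₁, hzw₂] using hz.derives
  · rintro _ rfl
    rfl
  · rintro _ ⟨-, rfl, -, ⟨e, (he : e.flatMap f = []), -, rfl, rfl⟩, rfl⟩
    exact mem_preimageSem_erase.mpr (by simp [hδ, he])
  · rintro _ ⟨-, rfl, -, ⟨e, (he : e.flatMap f = []), -, rfl, rfl⟩, rfl⟩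
    exact ⟨[a], .terminal a .nil, by simp [he, List.dropLast_append_getLast? a ha]⟩
  · rintro _ rfl
    exact ⟨[a], .terminal a .nil, by simp [List.dropLast_append_getLast? a ha]⟩
  · intro w hw
    obtain ⟨z, hz, hxz⟩ := exists_yields_of_mem_liftings hu hw
    exact ⟨z, by simpa using Yields.nonterminal hr hz .nil, hxz⟩

theorem preimageSemList_le_of_produces {u v : List (Symbol Δ (PreimageNT α g.NT))}
    (h : (g.preimage f).Produces u v) : preimageSemList g f v ≤ preimageSemList g f u := by
  obtain ⟨r, hr, hrw⟩ := h
  obtain ⟨p, q, rfl, rfl⟩ := hrw.exists_parts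
  simp only [preimageSemList_append]
  gcongr
  simpa [preimageSemList_singleton] using preimageSemList_le_of_mem hr

theorem preimageSemList_le_of_derives {u v : List (Symbol Δ (PreimageNT α g.NT))}
    (h : (g.preimage f).Derives u v) : preimageSemList g f v ≤ preimageSemList g f u := by
  induction h with
  | refl => exact le_rfl
  | tail _ hp ih => exact (preimageSemList_le_of_produces hp).trans ih

theorem flatMap_mem_language_of_mem_preimage {w : List Δ} (hw : w ∈ (g.preimage f).language) :
    w.flatMap f ∈ g.language := by
  have hmem : w ∈ preimageSemList g f [.nonterminal .start] :=
    preimageSemList_le_of_derives hw (mem_preimageSemList_map_terminal w)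
  rwa [preimageSemList_singleton, mem_preimageSem_start] at hmem

/-- Cutting `w.flatMap f ++ y` after the prefix `v`: the cut falls inside the block of the first
letter of `w₂`, leaving the overhang `b`. -/
theorem exists_split_of_append_eq_flatMap_append (hy : y ∈ blockPrefixes f) :
    ∀ {w : List Δ} {v z : List α}, v ++ z = w.flatMap f ++ y →
      ∃ w₁ w₂ b, w = w₁ ++ w₂ ∧ v = w₁.flatMap f ++ b ∧ b ++ z = w₂.flatMap f ++ y ∧
        (∀ δ ∈ w₂.head?, b.length < (f δ).length) ∧ b ∈ blockPrefixes f
  | [], v, z, h =>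
    ⟨[], [], v, rfl, rfl, h, by simp, mem_blockPrefixes_of_prefix ⟨z, by simpa using h⟩ hy⟩
  | δ :: w, v, z, h => by
    have hv : v <+: f δ ++ (w.flatMap f ++ y) := ⟨z, by simpa using h⟩
    by_cases hlt : v.length < (f δ).length
    · refine ⟨[], δ :: w, v, rfl, rfl, h, by simpa using hlt, ?_⟩
      exact mem_blockPrefixes_of_prefix_block
        (List.prefix_of_prefix_length_le hv (List.prefix_append _ _) hlt.le)
    · obtain ⟨v, rfl⟩ :=
        List.prefix_of_prefix_length_le (List.prefix_append _ _) hv (not_lt.mp hlt)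
      obtain ⟨w₁, w₂, b, rfl, rfl, hb⟩ :=
        exists_split_of_append_eq_flatMap_append hy (w := w) (v := v) (z := z) (by simpa using h)
      exact ⟨δ :: w₁, w₂, b, rfl, by simp, hb⟩

theorem preimage_derives_erase {w : List Δ} (hw : w.flatMap f = []) :
    (g.preimage f).Derives [.nonterminal .erase] (w.map .terminal) := by
  induction w with
  | nil => exact preimage_produces_erase_nil.single
  | cons δ w ih =>
    rw [List.flatMap_cons, List.append_eq_nil_iff] at hw
    exact (preimage_produces_erase_cons hw.1).trans_derives ((ih hw.2).append_left [.terminal δ])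

/-- The overhang `x` must be a proper prefix of the first block of `w`: then a terminal `a` either
extends `x` inside that block or completes it. -/
def TripleDerives (g : ContextFreeGrammar α) (f : Δ → List α) (X : Symbol α g.NT) (z : List α) :
    Prop :=
  ∀ ⦃x y : List α⦄ ⦃w : List Δ⦄, x ++ z = w.flatMap f ++ y →
    (∀ δ ∈ w.head?, x.length < (f δ).length) → x ∈ blockPrefixes f → y ∈ blockPrefixes f →
    (g.preimage f).Derives [.nonterminal (.triple x X y)] (w.map .terminal)

def LiftingDerives (g : ContextFreeGrammar α) (f : Δ → List α) (s : List (Symbol α g.NT))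
    (z : List α) : Prop :=
  ∀ ⦃x y : List α⦄ ⦃w : List Δ⦄, x ++ z = w.flatMap f ++ y →
    (∀ δ ∈ w.head?, x.length < (f δ).length) → x ∈ blockPrefixes f → y ∈ blockPrefixes f →
    ∃ u ∈ liftings (blockPrefixes f) x s y, (g.preimage f).Derives u (w.map .terminal)

theorem tripleDerives_terminal (a : α) : TripleDerives g f (.terminal a) [a] := by
  intro x y w h hw _ hy
  cases w with
  | nil =>
    obtain rfl : y = x ++ [a] := by simpa using h.symm
    exact (preimage_produces_shift hy).single
  | cons δ e =>
    have hlen := congrArg List.length h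
    have hδ := hw δ rfl
    simp only [List.length_append, List.length_singleton, List.flatMap_cons] at hlen
    obtain ⟨he, rfl⟩ : e.flatMap f = [] ∧ y = [] := by
      rw [← List.length_eq_zero_iff, ← List.length_eq_zero_iff]
      omega
    have hfδ : f δ = x ++ [a] := by simpa [he] using h.symm
    exact (preimage_produces_read hfδ).trans_derives
      ((preimage_derives_erase he).append_left [.terminal δ])

theorem liftingDerives_nil : LiftingDerives g f [] [] := by
  intro x y w h hw _ _
  cases w with
  | nil =>
    obtain rfl : x = y := by simpa using h
    exact ⟨[], nil_mem_liftings, .refl _⟩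
  | cons δ w =>
    have hlen := congrArg List.length h
    have hδ := hw δ rfl
    simp only [List.append_nil, List.flatMap_cons, List.length_append] at hlen
    omega

theorem LiftingDerives.cons {X : Symbol α g.NT} {s : List (Symbol α g.NT)} {z₁ z₂ : List α}
    (hX : TripleDerives g f X z₁) (hs : LiftingDerives g f s z₂) :
    LiftingDerives g f (X :: s) (z₁ ++ z₂) := by
  intro x y w h hw hx hy
  obtain ⟨w₁, w₂, b, rfl, hxz₁, hbz₂, hw₂, hb⟩ :=
    exists_split_of_append_eq_flatMap_append hy (v := x ++ z₁) (by simpa using h)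
  have hw₁ : ∀ δ ∈ w₁.head?, x.length < (f δ).length := fun δ hδ =>
    hw δ (by simp_all [List.head?_append])
  obtain ⟨u, hu, hder⟩ := hs (by simpa [hxz₁] using hbz₂) hw₂ hb hy
  refine ⟨_, cons_mem_liftings hb hu, ?_⟩
  rw [List.map_append]
  exact ((hX hxz₁ hw₁ hx hb).append_right u).trans (hder.append_left _)

theorem LiftingDerives.tripleDerives_nonterminal {r : ContextFreeRule α g.NT} (hr : r ∈ g.rules)
    {z : List α} (h : LiftingDerives g f r.output z) :
    TripleDerives g f (.nonterminal r.input) z := by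
  intro x y w hxz hw hx hy
  obtain ⟨u, hu, hder⟩ := h hxz hw hx hy
  exact (preimage_produces_lift hr hx hy hu).trans_derives hder

theorem Yields.liftingDerives {s : List (Symbol α g.NT)} {z : List α} (h : g.Yields s z) :
    LiftingDerives g f s z := by
  induction h with
  | nil => exact liftingDerives_nil
  | terminal a _ ih => exact LiftingDerives.cons (tripleDerives_terminal a) ih
  | nonterminal hr _ _ ih₁ ih₂ =>
    exact LiftingDerives.cons (ih₁.tripleDerives_nonterminal hr) ih₂

theorem mem_preimage_of_flatMap_mem_language {w : List Δ} (hw : w.flatMap f ∈ g.language) :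
    w ∈ (g.preimage f).language := by
  obtain ⟨e, w', b, rfl, heb, hbw, hw', -⟩ :=
    exists_split_of_append_eq_flatMap_append nil_mem_blockPrefixes (f := f) (w := w) (v := [])
      (z := w.flatMap f) (by simp)
  obtain ⟨he, rfl⟩ := List.append_eq_nil_iff.mp heb.symm
  obtain ⟨u, hu, hder⟩ := (derives_iff_yields.mp hw).liftingDerives (f := f) hbw hw'
    nil_mem_blockPrefixes nil_mem_blockPrefixes
  rw [eq_of_mem_liftings_singleton hu] at hder
  rw [mem_language_iff, List.map_append]
  exact preimage_produces_start.trans_derives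
    (((preimage_derives_erase he).append_right _).trans (hder.append_left _))

theorem language_preimage (g : ContextFreeGrammar α) (f : Δ → List α) :
    (g.preimage f).language = {w | w.flatMap f ∈ g.language} :=
  Set.ext fun _ => ⟨flatMap_mem_language_of_mem_preimage, mem_preimage_of_flatMap_mem_language⟩

end Preimage

end ContextFreeGrammar

theorem Language.IsContextFree.preimage_flatMap {α : Type} {Δ : Type*} [Fintype Δ]
    {L : Language α} (hL : L.IsContextFree) (f : Δ → List α) :
    Language.IsContextFree {w : List Δ | w.flatMap f ∈ L} := by
  obtain ⟨g, rfl⟩ := hL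
  exact ⟨g.preimage f, g.language_preimage f⟩

theorem FreeMonoid.map_ofList_flatMap {α Δ M : Type*} [Monoid M] (φ : FreeMonoid α →* M)
    (ψ : FreeMonoid Δ →* M) {f : Δ → List α} (hf : ∀ δ, φ (ofList (f δ)) = ψ (of δ))
    (w : List Δ) : φ (ofList (w.flatMap f)) = ψ (ofList w) := by
  induction w with
  | nil => simp [ofList_nil]
  | cons δ w ih => rw [List.flatMap_cons, ofList_append, ofList_cons, map_mul, map_mul, hf, ih]

theorem wordProblem_contextFree_of_fg_subgroup_general
    {α Δ : Type} [Fintype Δ] {G : Type} [Group G] (H : Subgroup G)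
    (σ : FreeMonoid α →* G) (hσ : Function.Surjective σ)
    (μ : FreeMonoid Δ →* H)
    (h : Language.IsContextFree {w : List α | σ (FreeMonoid.ofList w) = 1}) :
    Language.IsContextFree {w : List Δ | μ (FreeMonoid.ofList w) = 1} := by
  choose lift hlift using hσ
  let f : Δ → List α := fun δ => (lift (μ (.of δ))).toList
  have hf (w : List Δ) : σ (.ofList (w.flatMap f)) = H.subtype (μ (.ofList w)) :=
    FreeMonoid.map_ofList_flatMap σ (H.subtype.comp μ) (fun δ => hlift _) w
  have hwp : {w : List Δ | μ (FreeMonoid.ofList w) = 1} =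
      {w : List Δ | w.flatMap f ∈ {w : List α | σ (FreeMonoid.ofList w) = 1}} := by
    ext w
    simp [hf]
  rw [hwp]
  exact h.preimage_flatMap f

/-- Theorem 6.4 (for context-free languages): the class of groups with context-free
word problem is closed under finitely generated subgroups. -/
theorem wordProblem_contextFree_of_fg_subgroup
    {α Δ : Type} [Fintype α] [Fintype Δ] {G : Type} [Group G] (H : Subgroup G)
    (hfg : H.FG)
    (σ : FreeMonoid α →* G) (hσ : Function.Surjective σ)
    (μ : FreeMonoid Δ →* H) (hμ : Function.Surjective μ)
    (h : Language.IsContextFree {w : List α | σ (FreeMonoid.ofList w) = 1}) :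
    Language.IsContextFree {w : List Δ | μ (FreeMonoid.ofList w) = 1} :=
  wordProblem_contextFree_of_fg_subgroup_general H σ hσ μ h
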